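/- arXiv:2505.01748 — 3 statements merged into one kernel-verified Lean document; each statement's English description precedes it below -/
import Mathlib

section
/- Let s ≥ 1 be an integer, σ > 0 a real number, and let u : [0,1] → ℝ be of class C^{2s}, satisfying the boundary conditions u(0) = u(1) = 0 and u^{(j)}(0) = u^{(j)}(1) = 0 for every integer j with s ≤ j ≤ 2s − 2. If (−1)^{s} u^{(2s)}(x) − σ u''(x) = 0 for all x ∈ [0,1], then u is identically zero. -/
/-!
Multiply the equation by `u` and integrate over `[0, 1]`. Integrating by parts `s` times, the
boundary terms vanish because at each step one factor is either `u` or one of the derivatives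
`u^{(j)}`, `s ≤ j ≤ 2s - 2`, so `∫ u^{(2s)} u = (-1)^s ∫ (u^{(s)})²`; in the same way
`∫ u'' u = -∫ (u')²`. Hence `∫ (u^{(s)})² + σ ∫ (u')² = 0`, which forces `u' ≡ 0`, and
`u ≡ u 0 = 0`.
-/

open Set intervalIntegral

section

variable {f : ℝ → ℝ} {a b : ℝ} {n : ℕ}

theorem ContDiffOn.hasDerivWithinAt_iteratedDerivWithin {s : Set ℝ} {x : ℝ} {j : ℕ}
    (hf : ContDiffOn ℝ n f s) (hs : UniqueDiffOn ℝ s) (hj : j < n) (hx : x ∈ s) :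
    HasDerivWithinAt (iteratedDerivWithin j f s) (iteratedDerivWithin (j + 1) f s x) s x := by
  rw [iteratedDerivWithin_succ]
  exact (hf.differentiableOn_iteratedDerivWithin (by exact_mod_cast hj) hs x hx).hasDerivWithinAt

theorem ContDiffOn.integral_iteratedDerivWithin_succ_mul {i j : ℕ} (hab : a < b)
    (hf : ContDiffOn ℝ n f (Icc a b)) (hi : i < n) (hj : j < n)
    (ha : iteratedDerivWithin i f (Icc a b) a * iteratedDerivWithin j f (Icc a b) a = 0)
    (hb : iteratedDerivWithin i f (Icc a b) b * iteratedDerivWithin j f (Icc a b) b = 0) :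
    ∫ x in a..b, iteratedDerivWithin (i + 1) f (Icc a b) x * iteratedDerivWithin j f (Icc a b) x =
      -∫ x in a..b, iteratedDerivWithin i f (Icc a b) x *
        iteratedDerivWithin (j + 1) f (Icc a b) x := by
  have hs := uniqueDiffOn_Icc hab
  have hderiv {k : ℕ} (hk : k < n) : ∀ x ∈ uIcc a b, HasDerivWithinAt
      (iteratedDerivWithin k f (Icc a b)) (iteratedDerivWithin (k + 1) f (Icc a b) x)
      (uIcc a b) x := by
    rw [uIcc_of_le hab.le]
    exact fun x hx ↦ hf.hasDerivWithinAt_iteratedDerivWithin hs hk hx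
  have hint {k : ℕ} (hk : k ≤ n) :
      IntervalIntegrable (iteratedDerivWithin k f (Icc a b)) MeasureTheory.volume a b :=
    (hf.continuousOn_iteratedDerivWithin (by exact_mod_cast hk) hs).intervalIntegrable_of_Icc
      hab.le
  rw [integral_mul_deriv_eq_deriv_mul_of_hasDerivWithinAt (hderiv hi) (hderiv hj) (hint hi)
    (hint hj), ha, hb]
  ring

theorem ContDiffOn.integral_iteratedDerivWithin_add_mul_sub {m k : ℕ} (hab : a < b)
    (hf : ContDiffOn ℝ (m + k : ℕ) f (Icc a b)) (hkm : k ≤ m)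
    (hbdry : ∀ i < k, ∀ x ∈ ({a, b} : Set ℝ),
      iteratedDerivWithin (m + i) f (Icc a b) x *
        iteratedDerivWithin (m - (i + 1)) f (Icc a b) x = 0) :
    ∫ x in a..b, iteratedDerivWithin (m + k) f (Icc a b) x *
        iteratedDerivWithin (m - k) f (Icc a b) x =
      (-1) ^ k * ∫ x in a..b, iteratedDerivWithin m f (Icc a b) x *
        iteratedDerivWithin m f (Icc a b) x := by
  induction k with
  | zero => simp
  | succ k ih =>
    have hibp := hf.integral_iteratedDerivWithin_succ_mul (i := m + k) (j := m - (k + 1)) hab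
      (by omega) (by omega) (hbdry k k.lt_succ_self a (by simp))
      (hbdry k k.lt_succ_self b (by simp))
    rw [← add_assoc, hibp, show m - (k + 1) + 1 = m - k by omega,
      ih (hf.of_le (by exact_mod_cast (m + k).le_succ)) (by omega)
        (fun i hi ↦ hbdry i (hi.trans k.lt_succ_self))]
    ring

theorem ContDiffOn.integral_iteratedDerivWithin_two_mul_mul {s : ℕ} (hab : a < b)
    (hf : ContDiffOn ℝ (2 * s : ℕ) f (Icc a b)) (ha : f a = 0) (hb : f b = 0)
    (hbj : ∀ j : ℕ, s ≤ j → j ≤ 2 * s - 2 →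
      iteratedDerivWithin j f (Icc a b) a = 0 ∧ iteratedDerivWithin j f (Icc a b) b = 0) :
    ∫ x in a..b, iteratedDerivWithin (2 * s) f (Icc a b) x * f x =
      (-1) ^ s * ∫ x in a..b, iteratedDerivWithin s f (Icc a b) x *
        iteratedDerivWithin s f (Icc a b) x := by
  have hf0 : iteratedDerivWithin 0 f (Icc a b) = f := iteratedDerivWithin_zero
  have hbdry : ∀ i < s, ∀ x ∈ ({a, b} : Set ℝ),
      iteratedDerivWithin (s + i) f (Icc a b) x *
        iteratedDerivWithin (s - (i + 1)) f (Icc a b) x = 0 := by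
    rintro i hi x (rfl | rfl)
    all_goals rcases Nat.lt_or_ge (i + 1) s with hlt | hge
    · simp [(hbj (s + i) (by omega) (by omega)).1]
    · simp [show s - (i + 1) = 0 by omega, hf0, ha]
    · simp [(hbj (s + i) (by omega) (by omega)).2]
    · simp [show s - (i + 1) = 0 by omega, hf0, hb]
  have key := (two_mul s ▸ hf).integral_iteratedDerivWithin_add_mul_sub hab le_rfl hbdry
  rwa [← two_mul, Nat.sub_self, hf0] at key

theorem eq_zero_of_integral_mul_self_eq_zero {g : ℝ → ℝ} (hab : a < b)
    (hg : ContinuousOn g (Icc a b)) (h : ∫ x in a..b, g x * g x = 0) :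
    ∀ x ∈ Icc a b, g x = 0 := by
  by_contra! hne
  obtain ⟨c, hc, hgc⟩ := hne
  have hpos := integral_pos hab (hg.mul hg) (fun x _ ↦ mul_self_nonneg (g x))
    ⟨c, hc, mul_self_pos.mpr hgc⟩
  exact hpos.ne' h

theorem ContDiffOn.eq_zero_of_integral_derivWithin_mul_self_eq_zero (hab : a < b)
    (hf : ContDiffOn ℝ 1 f (Icc a b)) (ha : f a = 0)
    (h : ∫ x in a..b, derivWithin f (Icc a b) x * derivWithin f (Icc a b) x = 0) :
    ∀ x ∈ Icc a b, f x = 0 := by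
  have hcont : ContinuousOn (derivWithin f (Icc a b)) (Icc a b) := by
    simpa only [iteratedDerivWithin_one] using
      hf.continuousOn_iteratedDerivWithin (m := 1) le_rfl (uniqueDiffOn_Icc hab)
  have hderiv := eq_zero_of_integral_mul_self_eq_zero hab hcont h
  intro x hx
  rw [constant_of_derivWithin_zero (hf.differentiableOn one_ne_zero)
    (fun y hy ↦ hderiv y (Ico_subset_Icc_self hy)) x hx, ha]

end

/-- Injectivity of the operator L_σ u = (−1)^s u^{(2s)} − σ u'' on [0,1] with the
boundary conditions u = u^{(s)} = u^{(s+1)} = … = u^{(2s−2)} = 0 at x = 0 and x = 1. -/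
theorem stmt_9 (s : ℕ) (hs : 1 ≤ s) (σ : ℝ) (hσ : 0 < σ) (u : ℝ → ℝ)
    (hu : ContDiffOn ℝ (2 * s : ℕ) u (Set.Icc 0 1))
    (hb0 : u 0 = 0) (hb1 : u 1 = 0)
    (hbj : ∀ j : ℕ, s ≤ j → j ≤ 2 * s - 2 →
      iteratedDerivWithin j u (Set.Icc 0 1) 0 = 0 ∧
      iteratedDerivWithin j u (Set.Icc 0 1) 1 = 0)
    (hode : ∀ x ∈ Set.Icc (0:ℝ) 1,
      (-1 : ℝ) ^ s * iteratedDerivWithin (2 * s) u (Set.Icc 0 1) x -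
        σ * iteratedDerivWithin 2 u (Set.Icc 0 1) x = 0) :
    ∀ x ∈ Set.Icc (0:ℝ) 1, u x = 0 := by
  set D : ℕ → ℝ → ℝ := fun j ↦ iteratedDerivWithin j u (Icc 0 1)
  have hu2 : ContDiffOn ℝ (2 * 1 : ℕ) u (Icc 0 1) := hu.of_le (by exact_mod_cast by omega)
  have hsq : ((-1 : ℝ) ^ s) ^ 2 = 1 := by rw [← pow_mul, pow_mul', neg_one_sq, one_pow]
  have hhigh : ∫ x in 0..1, D (2 * s) x * u x = (-1) ^ s * ∫ x in 0..1, D s x * D s x :=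
    hu.integral_iteratedDerivWithin_two_mul_mul zero_lt_one hb0 hb1 hbj
  have hlow : ∫ x in 0..1, D 2 x * u x = -∫ x in 0..1, D 1 x * D 1 x := by
    simpa only [pow_one, neg_one_mul] using
      hu2.integral_iteratedDerivWithin_two_mul_mul zero_lt_one hb0 hb1 (fun j _ _ ↦ by omega)
  have hode_int :
      ∫ x in 0..1, D (2 * s) x * u x = (-1) ^ s * σ * ∫ x in 0..1, D 2 x * u x := by
    rw [← integral_const_mul]
    refine integral_congr fun x hx ↦ ?_
    rw [uIcc_of_le zero_le_one] at hx
    linear_combination (-1 : ℝ) ^ s * u x * hode x hx - D (2 * s) x * u x * hsq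
  have henergy : (∫ x in 0..1, D s x * D s x) + σ * ∫ x in 0..1, D 1 x * D 1 x = 0 := by
    generalize (-1 : ℝ) ^ s = E at hhigh hode_int hsq
    linear_combination -E * (hhigh - hode_int) +
      (σ * (∫ x in 0..1, D 2 x * u x) - ∫ x in 0..1, D s x * D s x) * hsq + σ * hlow
  refine (hu2.of_le (by norm_num)).eq_zero_of_integral_derivWithin_mul_self_eq_zero
    zero_lt_one hb0 ?_
  have hIs : 0 ≤ ∫ x in 0..1, D s x * D s x :=
    integral_nonneg zero_le_one fun x _ ↦ mul_self_nonneg (D s x)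
  have hI1 : 0 ≤ ∫ x in 0..1, D 1 x * D 1 x :=
    integral_nonneg zero_le_one fun x _ ↦ mul_self_nonneg (D 1 x)
  simp only [D, iteratedDerivWithin_one] at henergy hI1
  nlinarith
end

section
/- Define a : ℝ³ × ℝ³ → ℝ³ × ℝ³ by a(p, q) = ( q × (p × q), (p × q) × p ), where × denotes the cross product on ℝ³. Then a is differentiable and its derivative at every point is a symmetric linear operator on ℝ⁶ ≅ ℝ³ × ℝ³: for every w ∈ ℝ³ × ℝ³ and all u, u' ∈ ℝ³ × ℝ³, ⟨Da(w) u, u'⟩ = ⟨u, Da(w) u'⟩, where ⟨·,·⟩ is the Euclidean inner product on ℝ³ × ℝ³. Equivalently, writing a = (a₁, …, a₆) as a function of w = (w₁, …, w₆) ∈ ℝ⁶, one has ∂_{w_j} a_i = ∂_{w_i} a_j for all i, j ∈ {1, …, 6}. -/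
/-!
The map `a` is the gradient of the potential `½ |p × q|²`: differentiating gives
`(p × q) · (h × q + p × k) = h · (q × (p × q)) + k · ((p × q) × p)` by the cyclic symmetry of the
triple product. Hence `Da(w)` is the Hessian of a smooth function, which is symmetric by Schwarz's
theorem.
-/

noncomputable section

/-- The nonlinearity of the stationary Euler system:
a(p,q) = (q × (p × q), (p × q) × p). -/
def eulerA : (Fin 3 → ℝ) × (Fin 3 → ℝ) → (Fin 3 → ℝ) × (Fin 3 → ℝ) :=
  fun w => (crossProduct w.2 (crossProduct w.1 w.2),
            crossProduct (crossProduct w.1 w.2) w.1)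

/-- Euclidean inner product on ℝ³ × ℝ³ ≅ ℝ⁶. -/
def dot6 (u v : (Fin 3 → ℝ) × (Fin 3 → ℝ)) : ℝ :=
  (∑ i, u.1 i * v.1 i) + (∑ i, u.2 i * v.2 i)

theorem apply_fderiv_symm_of_hasFDerivAt {𝕜 E F : Type*} [RCLike 𝕜]
    [NormedAddCommGroup E] [NormedSpace 𝕜 E] [NormedAddCommGroup F] [NormedSpace 𝕜 F]
    {φ : E → 𝕜} {g : E → F} (B : F →L[𝕜] E →L[𝕜] 𝕜) (hg : ContDiff 𝕜 1 g)
    (hφ : ∀ y, HasFDerivAt φ (B (g y)) y) (x u v : E) :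
    B (fderiv 𝕜 g x u) v = B (fderiv 𝕜 g x v) u := by
  have hφ₂ : ContDiff 𝕜 2 φ := contDiff_succ_iff_hasFDerivAt.2 ⟨_, B.contDiff.comp hg, hφ⟩
  have hDφ : fderiv 𝕜 φ = fun y => B (g y) := funext fun y => (hφ y).fderiv
  have hD₂φ : fderiv 𝕜 (fderiv 𝕜 φ) x = B.comp (fderiv 𝕜 g x) := by
    rw [hDφ]
    exact (B.hasFDerivAt.comp x (hg.differentiable one_ne_zero x).hasFDerivAt).fderiv
  simpa [hD₂φ] using (hφ₂.contDiffAt (x := x)).isSymmSndFDerivAt (by simp) u v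

open Matrix

namespace EulerNonlinearity

local notation "ℝ³" => Fin 3 → ℝ

def crossL : ℝ³ →L[ℝ] ℝ³ →L[ℝ] ℝ³ :=
  crossProduct.toContinuousBilinearMap

def dotL : ℝ³ →L[ℝ] ℝ³ →L[ℝ] ℝ :=
  (dotProductBilin ℝ ℝ).toContinuousBilinearMap

def dot6L : ℝ³ × ℝ³ →L[ℝ] ℝ³ × ℝ³ →L[ℝ] ℝ :=
  dotL.bilinearComp (.fst ℝ _ _) (.fst ℝ _ _) + dotL.bilinearComp (.snd ℝ _ _) (.snd ℝ _ _)

theorem dot6L_apply (u v : ℝ³ × ℝ³) : dot6L u v = dot6 u v := rfl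

theorem dot6_comm (u v : ℝ³ × ℝ³) : dot6 u v = dot6 v u := by
  simp only [dot6, mul_comm]

theorem contDiff_eulerA {n : WithTop ℕ∞} : ContDiff ℝ n eulerA := by
  change ContDiff ℝ n fun w : ℝ³ × ℝ³ => (crossL w.2 (crossL w.1 w.2), crossL (crossL w.1 w.2) w.1)
  fun_prop

def crossPotential (w : ℝ³ × ℝ³) : ℝ :=
  (w.1 ⨯₃ w.2) ⬝ᵥ (w.1 ⨯₃ w.2) / 2

theorem dot6_eulerA (w u : ℝ³ × ℝ³) :
    dot6 (eulerA w) u = (w.1 ⨯₃ w.2) ⬝ᵥ (u.1 ⨯₃ w.2 + w.1 ⨯₃ u.2) := by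
  rw [dotProduct_add, triple_product_permutation _ u.1, ← triple_product_permutation u.2,
    dotProduct_comm u.1, dotProduct_comm u.2]
  rfl

theorem hasFDerivAt_crossPotential (w : ℝ³ × ℝ³) :
    HasFDerivAt crossPotential (dot6L (eulerA w)) w := by
  have hcross : HasFDerivAt (fun y : ℝ³ × ℝ³ => crossL y.1 y.2)
      (crossL.precompR _ w.1 (.snd ℝ _ _) + crossL.precompL _ (.fst ℝ _ _) w.2) w :=
    crossL.hasFDerivAt_of_bilinear hasFDerivAt_fst hasFDerivAt_snd
  refine ((dotL.hasFDerivAt_of_bilinear hcross hcross).mul_const 2⁻¹).congr_fderiv ?_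
  refine ContinuousLinearMap.ext fun u => ?_
  change 2⁻¹ * ((w.1 ⨯₃ w.2) ⬝ᵥ (w.1 ⨯₃ u.2 + u.1 ⨯₃ w.2)
    + (w.1 ⨯₃ u.2 + u.1 ⨯₃ w.2) ⬝ᵥ (w.1 ⨯₃ w.2)) = dot6 (eulerA w) u
  rw [dot6_eulerA, dotProduct_comm _ (w.1 ⨯₃ w.2), add_comm (w.1 ⨯₃ u.2)]
  ring

end EulerNonlinearity

open EulerNonlinearity

/-- The map a is differentiable and its derivative at every point is a symmetric
linear operator on ℝ⁶ (equivalently ∂_{w_j}a_i = ∂_{w_i}a_j for all i, j). -/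
theorem stmt_12 :
    Differentiable ℝ eulerA ∧
      ∀ w u u' : (Fin 3 → ℝ) × (Fin 3 → ℝ),
        dot6 (fderiv ℝ eulerA w u) u' = dot6 u (fderiv ℝ eulerA w u') := by
  refine ⟨contDiff_eulerA.differentiable one_ne_zero, fun w u u' => ?_⟩
  rw [dot6_comm u, ← dot6L_apply, ← dot6L_apply]
  exact apply_fderiv_symm_of_hasFDerivAt dot6L contDiff_eulerA hasFDerivAt_crossPotential w u u'

end
end

section
/- Let s ≥ 5 be an integer and let a = (a₁, a₂) : [0,1] × ℝ × ℝ² → ℝ², (x₁, x₂, z₁, z₂) ↦ a(x, z), be of class C^{s+1}, 1-periodic in x₂, satisfying the symmetry ∂_{z₂}a₁ = ∂_{z₁}a₂. Then there exist constants C > 0 and r₀ > 0 such that for every F ∈ C^∞([0,1] × ℝ, ℝ), 1-periodic in x₂, with F(0,·) = F(1,·) = 0 and ‖F‖_{H^s(𝒫)} ≤ r₀, one has |I₂ + I₃| ≤ C ‖F‖³_{H^s(𝒫)}, where I₂ = ∫_𝒫 s Σ_{i=1}^{2} Σ_{q=1}^{2} Σ_{p ≠ i} (∂_{z_p}∂_{z_q}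 a_i)(x, ∇F) (∂_{x₂}^{s−1}∂_{x_p} F)(∂_{x₂}∂_{x_q} F)(∂_{x₂}^{s}∂_{x_i} F) dx₁ dx₂ and I₃ = ∫_𝒫 s Σ_{i=1}^{2} Σ_{q=1}^{2} (∂_{z_i}∂_{z_q} a_i)(x, ∇F) (∂_{x₂}^{s−1}∂_{x_i} F)(∂_{x₂}∂_{x_q} F)(∂_{x₂}^{s}∂_{x_i} F) dx₁ dx₂. -/
open MeasureTheory

noncomputable section

/-- Partial derivative in the first variable. -/
def pd₁ (u : ℝ × ℝ → ℝ) : ℝ × ℝ → ℝ := fun x => deriv (fun t => u (t, x.2)) x.1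

/-- Partial derivative in the second variable. -/
def pd₂ (u : ℝ × ℝ → ℝ) : ℝ × ℝ → ℝ := fun x => deriv (fun t => u (x.1, t)) x.2

/-- The periodicity cell 𝒫 = (0,1)². -/
def unitSq : Set (ℝ × ℝ) := Set.Ioo 0 1 ×ˢ Set.Ioo 0 1

/-- Square of the L²(𝒫) norm. -/
def L2sq (w : ℝ × ℝ → ℝ) : ℝ := ∫ x in unitSq, (w x) ^ 2

/-- L²(𝒫) norm. -/
def l2 (w : ℝ × ℝ → ℝ) : ℝ := Real.sqrt (L2sq w)

/-- Square of the H^m(𝒫) norm: ∑_{β₁+β₂ ≤ m} ‖∂₁^{β₁}∂₂^{β₂}w‖²_{L²}. -/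
def Hsq (m : ℕ) (w : ℝ × ℝ → ℝ) : ℝ :=
  ∑ b ∈ Finset.range (m + 1), ∑ c ∈ Finset.range (m + 1 - b), L2sq (pd₁^[b] (pd₂^[c] w))

/-- L^∞(𝒫) norm (supremum of |w| over 𝒫). -/
def Linf (w : ℝ × ℝ → ℝ) : ℝ := sSup ((fun x => |w x|) '' unitSq)

/-- The strip [0,1] × ℝ. -/
def strip : Set (ℝ × ℝ) := Set.Icc 0 1 ×ˢ (Set.univ : Set ℝ)

/-- 1-periodicity in the second variable. -/
def Per1 (u : ℝ × ℝ → ℝ) : Prop := ∀ x₁ x₂ : ℝ, u (x₁, x₂ + 1) = u (x₁, x₂)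

/-- Homogeneous Dirichlet condition at x₁ = 0 and x₁ = 1. -/
def Dir (u : ℝ × ℝ → ℝ) : Prop := ∀ x₂ : ℝ, u (0, x₂) = 0 ∧ u (1, x₂) = 0

/-- Domain of the coefficient map a: ([0,1] × ℝ) × ℝ². -/
def slab4 : Set ((ℝ × ℝ) × ℝ × ℝ) :=
  (Set.Icc (0:ℝ) 1 ×ˢ (Set.univ : Set ℝ)) ×ˢ (Set.univ : Set (ℝ × ℝ))

/-- Partial derivative in the explicit variable x₁. -/
def dx₁ (b : (ℝ × ℝ) × ℝ × ℝ → ℝ) : (ℝ × ℝ) × ℝ × ℝ → ℝ :=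
  fun w => deriv (fun t => b ((t, w.1.2), w.2)) w.1.1

/-- Partial derivative in the explicit variable x₂. -/
def dx₂ (b : (ℝ × ℝ) × ℝ × ℝ → ℝ) : (ℝ × ℝ) × ℝ × ℝ → ℝ :=
  fun w => deriv (fun t => b ((w.1.1, t), w.2)) w.1.2

/-- Partial derivative in the variable z₁. -/
def dz₁ (b : (ℝ × ℝ) × ℝ × ℝ → ℝ) : (ℝ × ℝ) × ℝ × ℝ → ℝ :=
  fun w => deriv (fun t => b (w.1, (t, w.2.2))) w.2.1

/-- Partial derivative in the variable z₂. -/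
def dz₂ (b : (ℝ × ℝ) × ℝ × ℝ → ℝ) : (ℝ × ℝ) × ℝ × ℝ → ℝ :=
  fun w => deriv (fun t => b (w.1, (w.2.1, t))) w.2.2

/-- First component of a. -/
def A₁ (a : (ℝ × ℝ) × ℝ × ℝ → ℝ × ℝ) : (ℝ × ℝ) × ℝ × ℝ → ℝ := fun w => (a w).1

/-- Second component of a. -/
def A₂ (a : (ℝ × ℝ) × ℝ × ℝ → ℝ × ℝ) : (ℝ × ℝ) × ℝ × ℝ → ℝ := fun w => (a w).2

/-- The gradient ∇F = (∂₁F, ∂₂F). -/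
def gradc (F : ℝ × ℝ → ℝ) : ℝ × ℝ → ℝ × ℝ := fun x => (pd₁ F x, pd₂ F x)

/-- 1-periodicity of a in x₂. -/
def PerA (a : (ℝ × ℝ) × ℝ × ℝ → ℝ × ℝ) : Prop :=
  ∀ (x₁ x₂ : ℝ) (z : ℝ × ℝ), a ((x₁, x₂ + 1), z) = a ((x₁, x₂), z)

/-- Local coercivity of the Jacobian J_a of a in z:
p·(J_a(x,z)p) ≥ ρ p₁² for x₁ ∈ [0,1] and |z| ≤ ρ. -/
def CoercA (a : (ℝ × ℝ) × ℝ × ℝ → ℝ × ℝ) (ρ : ℝ) : Prop :=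
  ∀ x₁ ∈ Set.Icc (0:ℝ) 1, ∀ (x₂ : ℝ) (z : ℝ × ℝ), z.1 ^ 2 + z.2 ^ 2 ≤ ρ ^ 2 →
    ∀ p : ℝ × ℝ,
      dz₁ (A₁ a) ((x₁, x₂), z) * p.1 * p.1 + dz₂ (A₁ a) ((x₁, x₂), z) * p.1 * p.2 +
        dz₁ (A₂ a) ((x₁, x₂), z) * p.2 * p.1 + dz₂ (A₂ a) ((x₁, x₂), z) * p.2 * p.2 ≥
      ρ * p.1 ^ 2

/-- a(x₁,x₂,0,0) = (0,0). -/
def ZeroA (a : (ℝ × ℝ) × ℝ × ℝ → ℝ × ℝ) : Prop :=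
  ∀ x₁ x₂ : ℝ, a ((x₁, x₂), (0, 0)) = (0, 0)

/-- The symmetry hypothesis ∂_{z₂}a₁ = ∂_{z₁}a₂. -/
def SymA (a : (ℝ × ℝ) × ℝ × ℝ → ℝ × ℝ) : Prop :=
  ∀ w ∈ slab4, dz₂ (A₁ a) w = dz₁ (A₂ a) w

/-- The integral I₂ (sum over i, q and the index p ≠ i). -/
def I₂ (s : ℕ) (a : (ℝ × ℝ) × ℝ × ℝ → ℝ × ℝ) (F : ℝ × ℝ → ℝ) : ℝ :=
  ∫ x in unitSq, (s : ℝ) *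
    (dz₁ (dz₂ (A₁ a)) (x, gradc F x) * pd₂^[s - 1] (pd₂ F) x * pd₂ (pd₁ F) x *
        pd₂^[s] (pd₁ F) x +
      dz₂ (dz₂ (A₁ a)) (x, gradc F x) * pd₂^[s - 1] (pd₂ F) x * pd₂ (pd₂ F) x *
        pd₂^[s] (pd₁ F) x +
      dz₁ (dz₁ (A₂ a)) (x, gradc F x) * pd₂^[s - 1] (pd₁ F) x * pd₂ (pd₁ F) x *
        pd₂^[s] (pd₂ F) x +
      dz₂ (dz₁ (A₂ a)) (x, gradc F x) * pd₂^[s - 1] (pd₁ F) x * pd₂ (pd₂ F) x *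
        pd₂^[s] (pd₂ F) x)

/-- The integral I₃ (sum over i, q, with p = i). -/
def I₃ (s : ℕ) (a : (ℝ × ℝ) × ℝ × ℝ → ℝ × ℝ) (F : ℝ × ℝ → ℝ) : ℝ :=
  ∫ x in unitSq, (s : ℝ) *
    (dz₁ (dz₁ (A₁ a)) (x, gradc F x) * pd₂^[s - 1] (pd₁ F) x * pd₂ (pd₁ F) x *
        pd₂^[s] (pd₁ F) x +
      dz₂ (dz₁ (A₁ a)) (x, gradc F x) * pd₂^[s - 1] (pd₁ F) x * pd₂ (pd₂ F) x *
        pd₂^[s] (pd₁ F) x +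
      dz₁ (dz₂ (A₂ a)) (x, gradc F x) * pd₂^[s - 1] (pd₂ F) x * pd₂ (pd₁ F) x *
        pd₂^[s] (pd₂ F) x +
      dz₂ (dz₂ (A₂ a)) (x, gradc F x) * pd₂^[s - 1] (pd₂ F) x * pd₂ (pd₂ F) x *
        pd₂^[s] (pd₂ F) x)

/-!
Write `u₁ = ∂₂^(s-1) ∂₁F`, `u₂ = ∂₂^(s-1) ∂₂F` and, for a coefficient `b (x, z)`,
`T b = Σ_q (∂_{z_q} b)(x, ∇F) ∂₂∂_q F` (`pd₂ThroughGrad`). The symmetry `∂_{z₂}a₁ = ∂_{z₁}a₂`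
makes the integrand of `I₂` equal to `s · T(∂_{z₂}a₁) · ∂₂(u₁ u₂)`; the integrand of `I₃` is
`(s/2) · (T(∂_{z₁}a₁) · ∂₂(u₁²) + T(∂_{z₂}a₂) · ∂₂(u₂²))`. Integrating by parts in the
periodic variable `x₂` moves `∂₂` onto `T b`, which involves derivatives of `F` and of `a` of
order at most `3` only. The elementary embedding
`sup_𝒫 |w| ≤ ‖w‖_{L¹} + ‖∂₁w‖_{L¹} + ‖∂₂w‖_{L¹} + ‖∂₁∂₂w‖_{L¹}`, with `L² ⊂ L¹` on the unit square,
bounds the derivatives of `F` of order at most `s - 2 ≥ 3` by `4 ‖F‖_{H^s}`. So for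
`‖F‖_{H^s} ≤ 1` the gradient stays in a fixed ball, `|∂₂ (T b)| ≤ K ‖F‖_{H^s}`, and
`|∫ ∂₂(T b) u_i u_j| ≤ K ‖F‖_{H^s} (‖u_i‖² + ‖u_j‖²) / 2 ≤ K ‖F‖³_{H^s}`.
-/

open Set Filter Topology
open scoped ContDiff

def openStrip : Set (ℝ × ℝ) := Ioo 0 1 ×ˢ univ

lemma isOpen_openStrip : IsOpen openStrip := isOpen_Ioo.prod isOpen_univ

lemma mem_openStrip {x : ℝ × ℝ} : x ∈ openStrip ↔ x.1 ∈ Ioo (0 : ℝ) 1 := by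
  simp [openStrip]

lemma openStrip_subset_strip : openStrip ⊆ strip := prod_mono Ioo_subset_Icc_self subset_rfl

lemma strip_mem_nhds {x : ℝ × ℝ} (hx : x ∈ openStrip) : strip ∈ 𝓝 x :=
  mem_of_superset (isOpen_openStrip.mem_nhds hx) openStrip_subset_strip

lemma unitSq_subset_openStrip : unitSq ⊆ openStrip := prod_mono subset_rfl (subset_univ _)

lemma unitSq_subset_Icc : unitSq ⊆ Icc 0 1 ×ˢ Icc 0 1 :=
  prod_mono Ioo_subset_Icc_self Ioo_subset_Icc_self

lemma measurableSet_unitSq : MeasurableSet unitSq := measurableSet_Ioo.prod measurableSet_Ioo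

lemma volume_unitSq : volume unitSq = 1 := by
  simp [unitSq, Measure.volume_eq_prod, Measure.prod_prod]

instance isProbabilityMeasure_restrict_unitSq : IsProbabilityMeasure (volume.restrict unitSq) :=
  ⟨by simp [volume_unitSq]⟩

lemma uniqueDiffOn_strip : UniqueDiffOn ℝ strip :=
  (uniqueDiffOn_Icc one_pos).prod uniqueDiffOn_univ

lemma uniqueDiffOn_slab4 : UniqueDiffOn ℝ slab4 := uniqueDiffOn_strip.prod uniqueDiffOn_univ

section PartialDerivatives

variable {w E : ℝ × ℝ → ℝ} {x : ℝ × ℝ}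

lemma DifferentiableAt.hasDerivAt_pd₁ (h : DifferentiableAt ℝ E x) :
    HasDerivAt (fun t => E (t, x.2)) (fderiv ℝ E x (1, 0)) x.1 :=
  h.hasFDerivAt.comp_hasDerivAt_of_eq x.1 ((hasDerivAt_id _).prodMk (hasDerivAt_const _ _)) rfl

lemma DifferentiableAt.hasDerivAt_pd₂ (h : DifferentiableAt ℝ E x) :
    HasDerivAt (fun t => E (x.1, t)) (fderiv ℝ E x (0, 1)) x.2 :=
  h.hasFDerivAt.comp_hasDerivAt_of_eq x.2 ((hasDerivAt_const _ _).prodMk (hasDerivAt_id _)) rfl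

lemma pd₁_eq_fderiv (h : DifferentiableAt ℝ E x) : pd₁ E x = fderiv ℝ E x (1, 0) :=
  h.hasDerivAt_pd₁.deriv

lemma pd₂_eq_fderiv (h : DifferentiableAt ℝ E x) : pd₂ E x = fderiv ℝ E x (0, 1) :=
  h.hasDerivAt_pd₂.deriv

lemma Filter.EventuallyEq.comp_line₁ (h : w =ᶠ[𝓝 x] E) :
    (fun t => w (t, x.2)) =ᶠ[𝓝 x.1] fun t => E (t, x.2) :=
  h.comp_tendsto (Continuous.tendsto' (by fun_prop) _ _ rfl)

lemma Filter.EventuallyEq.comp_line₂ (h : w =ᶠ[𝓝 x] E) :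
    (fun t => w (x.1, t)) =ᶠ[𝓝 x.2] fun t => E (x.1, t) :=
  h.comp_tendsto (Continuous.tendsto' (by fun_prop) _ _ rfl)

lemma Filter.EventuallyEq.pd₁_eq (h : w =ᶠ[𝓝 x] E) : pd₁ w x = pd₁ E x :=
  h.comp_line₁.deriv_eq

lemma Filter.EventuallyEq.pd₂_eq (h : w =ᶠ[𝓝 x] E) : pd₂ w x = pd₂ E x :=
  h.comp_line₂.deriv_eq

lemma Filter.EventuallyEq.pd₁ (h : w =ᶠ[𝓝 x] E) : _root_.pd₁ w =ᶠ[𝓝 x] _root_.pd₁ E :=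
  h.eventually_nhds.mono fun _ hy => Filter.EventuallyEq.pd₁_eq hy

lemma Filter.EventuallyEq.pd₂ (h : w =ᶠ[𝓝 x] E) : _root_.pd₂ w =ᶠ[𝓝 x] _root_.pd₂ E :=
  h.eventually_nhds.mono fun _ hy => Filter.EventuallyEq.pd₂_eq hy

lemma pd₁_pd₂_eq_fderiv_fderiv (h : ContDiffAt ℝ 2 E x) :
    pd₁ (pd₂ E) x = fderiv ℝ (fderiv ℝ E) x (1, 0) (0, 1) := by
  have hdiff : ∀ᶠ y in 𝓝 x, DifferentiableAt ℝ E y :=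
    h.eventually (by simp) |>.mono fun y hy => hy.differentiableAt (by simp)
  have hE' : DifferentiableAt ℝ (fderiv ℝ E) x :=
    (h.fderiv_right (m := 1) le_rfl).differentiableAt (by simp)
  rw [Filter.EventuallyEq.pd₁_eq (hdiff.mono fun y hy => pd₂_eq_fderiv hy),
    pd₁_eq_fderiv (hE'.clm_apply (differentiableAt_const _)),
    fderiv_clm_apply hE' (differentiableAt_const _)]
  simp

lemma pd₂_pd₁_eq_fderiv_fderiv (h : ContDiffAt ℝ 2 E x) :
    pd₂ (pd₁ E) x = fderiv ℝ (fderiv ℝ E) x (0, 1) (1, 0) := by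
  have hdiff : ∀ᶠ y in 𝓝 x, DifferentiableAt ℝ E y :=
    h.eventually (by simp) |>.mono fun y hy => hy.differentiableAt (by simp)
  have hE' : DifferentiableAt ℝ (fderiv ℝ E) x :=
    (h.fderiv_right (m := 1) le_rfl).differentiableAt (by simp)
  rw [Filter.EventuallyEq.pd₂_eq (hdiff.mono fun y hy => pd₁_eq_fderiv hy),
    pd₂_eq_fderiv (hE'.clm_apply (differentiableAt_const _)),
    fderiv_clm_apply hE' (differentiableAt_const _)]
  simp

lemma ContDiffAt.pd₁_pd₂_comm (h : ContDiffAt ℝ 2 E x) : pd₁ (pd₂ E) x = pd₂ (pd₁ E) x := by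
  rw [pd₁_pd₂_eq_fderiv_fderiv h, pd₂_pd₁_eq_fderiv_fderiv h,
    h.isSymmSndFDerivAt (by simp)]

end PartialDerivatives

namespace Per1

variable {u v : ℝ × ℝ → ℝ}

lemma pd₁ (h : Per1 u) : Per1 (pd₁ u) := fun x₁ x₂ => by
  simp only [_root_.pd₁, h _ x₂]

lemma pd₂ (h : Per1 u) : Per1 (pd₂ u) := fun x₁ x₂ => by
  simp only [_root_.pd₂]
  rw [← deriv_comp_add_const]
  simp only [h x₁]

lemma iterate_pd₂ (h : Per1 u) (n : ℕ) : Per1 (_root_.pd₂^[n] u) := by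
  induction n with
  | zero => exact h
  | succ n ih => rw [Function.iterate_succ_apply']; exact ih.pd₂

lemma add (hu : Per1 u) (hv : Per1 v) : Per1 (fun x => u x + v x) := fun x₁ x₂ => by
  simp only [hu x₁ x₂, hv x₁ x₂]

lemma mul (hu : Per1 u) (hv : Per1 v) : Per1 (fun x => u x * v x) := fun x₁ x₂ => by
  simp only [hu x₁ x₂, hv x₁ x₂]

end Per1

lemma ContinuousOn.integrableOn_of_abs_le {α : Type*} [TopologicalSpace α] [MeasurableSpace α]
    [OpensMeasurableSpace α] {μ : Measure α} {g : α → ℝ} {s : Set α} {B : ℝ}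
    (hg : ContinuousOn g s) (hs : MeasurableSet s) (hμ : μ s < ⊤) (hB : ∀ x ∈ s, |g x| ≤ B) :
    IntegrableOn g s μ :=
  .of_bound hμ (hg.aestronglyMeasurable hs) B ((ae_restrict_iff' hs).2 (ae_of_all _ hB))

def BddCont (g : ℝ × ℝ → ℝ) : Prop :=
  ContinuousOn g openStrip ∧ ∃ B, ∀ x ∈ unitSq, |g x| ≤ B

namespace BddCont

variable {g h : ℝ × ℝ → ℝ}

lemma congr (hg : BddCont g) (hgh : EqOn g h openStrip) : BddCont h := by
  obtain ⟨hc, B, hB⟩ := hg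
  exact ⟨hc.congr hgh.symm, B, fun x hx => hgh (unitSq_subset_openStrip hx) ▸ hB x hx⟩

lemma add (hg : BddCont g) (hh : BddCont h) : BddCont (fun x => g x + h x) := by
  obtain ⟨hgc, B, hB⟩ := hg
  obtain ⟨hhc, C, hC⟩ := hh
  exact ⟨hgc.add hhc, B + C, fun x hx => (abs_add_le _ _).trans (add_le_add (hB x hx) (hC x hx))⟩

lemma mul (hg : BddCont g) (hh : BddCont h) : BddCont (fun x => g x * h x) := by
  obtain ⟨hgc, B, hB⟩ := hg
  obtain ⟨hhc, C, hC⟩ := hh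
  refine ⟨hgc.mul hhc, B * C, fun x hx => ?_⟩
  rw [abs_mul]
  exact mul_le_mul (hB x hx) (hC x hx) (abs_nonneg _) ((abs_nonneg _).trans (hB x hx))

lemma integrableOn (hg : BddCont g) : IntegrableOn g unitSq := by
  obtain ⟨hgc, B, hB⟩ := hg
  exact (hgc.mono unitSq_subset_openStrip).integrableOn_of_abs_le measurableSet_unitSq
    (by simp [volume_unitSq]) hB

lemma integrableOn_sq (hg : BddCont g) : IntegrableOn (fun x => g x ^ 2) unitSq := by
  simpa only [sq] using (hg.mul hg).integrableOn

lemma integrableOn_vert (hg : BddCont g) {x₁ : ℝ} (hx₁ : x₁ ∈ Ioo (0 : ℝ) 1) :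
    IntegrableOn (fun t => g (x₁, t)) (Ioo 0 1) := by
  obtain ⟨hgc, B, hB⟩ := hg
  refine ContinuousOn.integrableOn_of_abs_le ?_ measurableSet_Ioo measure_Ioo_lt_top
    fun t ht => hB _ ⟨hx₁, ht⟩
  exact hgc.comp (by fun_prop) fun _ _ => mem_openStrip.2 hx₁

lemma integrableOn_horiz (hg : BddCont g) {t : ℝ} (ht : t ∈ Ioo (0 : ℝ) 1) :
    IntegrableOn (fun y => g (y, t)) (Ioo 0 1) := by
  obtain ⟨hgc, B, hB⟩ := hg
  refine ContinuousOn.integrableOn_of_abs_le ?_ measurableSet_Ioo measure_Ioo_lt_top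
    fun y hy => hB _ ⟨hy, ht⟩
  exact hgc.comp (by fun_prop) fun _ hy => mem_openStrip.2 hy

end BddCont

/-- `pd₁` is a two-sided derivative, so on the lines `x₁ = 0, 1` it depends on values outside
the strip; we therefore only follow functions on the open strip, where they agree with a
function that is smooth up to the boundary. -/
def SmoothOnStrip (w : ℝ × ℝ → ℝ) : Prop :=
  ∃ E : ℝ × ℝ → ℝ, ContDiffOn ℝ ∞ E strip ∧ EqOn w E openStrip

namespace SmoothOnStrip

variable {w : ℝ × ℝ → ℝ}

lemma continuousOn (h : SmoothOnStrip w) : ContinuousOn w openStrip := by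
  obtain ⟨E, hE, heq⟩ := h
  exact (hE.continuousOn.mono openStrip_subset_strip).congr heq

lemma bddCont (h : SmoothOnStrip w) : BddCont w := by
  obtain ⟨E, hE, heq⟩ := id h
  have hK : Icc (0 : ℝ) 1 ×ˢ Icc (0 : ℝ) 1 ⊆ strip := prod_mono subset_rfl (subset_univ _)
  obtain ⟨B, hB⟩ := (isCompact_Icc.prod isCompact_Icc).exists_bound_of_continuousOn
    (hE.continuousOn.mono hK)
  refine ⟨h.continuousOn, B, fun x hx => ?_⟩
  rw [heq (unitSq_subset_openStrip hx), ← Real.norm_eq_abs]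
  exact hB x (unitSq_subset_Icc hx)

lemma pd₁ (h : SmoothOnStrip w) : SmoothOnStrip (pd₁ w) := by
  obtain ⟨E, hE, heq⟩ := h
  refine ⟨fun x => fderivWithin ℝ E strip x (1, 0),
    (hE.fderivWithin uniqueDiffOn_strip (by simp)).clm_apply contDiffOn_const, fun x hx => ?_⟩
  dsimp only
  rw [(heq.eventuallyEq_of_mem (isOpen_openStrip.mem_nhds hx)).pd₁_eq,
    pd₁_eq_fderiv ((hE.contDiffAt (strip_mem_nhds hx)).differentiableAt (by simp)),
    fderivWithin_of_mem_nhds (strip_mem_nhds hx)]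

lemma pd₂ (h : SmoothOnStrip w) : SmoothOnStrip (pd₂ w) := by
  obtain ⟨E, hE, heq⟩ := h
  refine ⟨fun x => fderivWithin ℝ E strip x (0, 1),
    (hE.fderivWithin uniqueDiffOn_strip (by simp)).clm_apply contDiffOn_const, fun x hx => ?_⟩
  dsimp only
  rw [(heq.eventuallyEq_of_mem (isOpen_openStrip.mem_nhds hx)).pd₂_eq,
    pd₂_eq_fderiv ((hE.contDiffAt (strip_mem_nhds hx)).differentiableAt (by simp)),
    fderivWithin_of_mem_nhds (strip_mem_nhds hx)]

lemma iterate_pd₁ (h : SmoothOnStrip w) (n : ℕ) : SmoothOnStrip (_root_.pd₁^[n] w) := by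
  induction n with
  | zero => exact h
  | succ n ih => rw [Function.iterate_succ_apply']; exact ih.pd₁

lemma iterate_pd₂ (h : SmoothOnStrip w) (n : ℕ) : SmoothOnStrip (_root_.pd₂^[n] w) := by
  induction n with
  | zero => exact h
  | succ n ih => rw [Function.iterate_succ_apply']; exact ih.pd₂

lemma hasDerivAt_pd₁ (h : SmoothOnStrip w) {x : ℝ × ℝ} (hx : x ∈ openStrip) :
    HasDerivAt (fun t => w (t, x.2)) (_root_.pd₁ w x) x.1 := by
  obtain ⟨E, hE, heq⟩ := h
  have hwE := heq.eventuallyEq_of_mem (isOpen_openStrip.mem_nhds hx)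
  have hd := (hE.contDiffAt (strip_mem_nhds hx)).differentiableAt (by simp)
  rw [hwE.pd₁_eq, pd₁_eq_fderiv hd]
  exact hd.hasDerivAt_pd₁.congr_of_eventuallyEq hwE.comp_line₁

lemma hasDerivAt_pd₂ (h : SmoothOnStrip w) {x : ℝ × ℝ} (hx : x ∈ openStrip) :
    HasDerivAt (fun t => w (x.1, t)) (_root_.pd₂ w x) x.2 := by
  obtain ⟨E, hE, heq⟩ := h
  have hwE := heq.eventuallyEq_of_mem (isOpen_openStrip.mem_nhds hx)
  have hd := (hE.contDiffAt (strip_mem_nhds hx)).differentiableAt (by simp)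
  rw [hwE.pd₂_eq, pd₂_eq_fderiv hd]
  exact hd.hasDerivAt_pd₂.congr_of_eventuallyEq hwE.comp_line₂

lemma pd₁_pd₂_comm (h : SmoothOnStrip w) {x : ℝ × ℝ} (hx : x ∈ openStrip) :
    _root_.pd₁ (_root_.pd₂ w) x = _root_.pd₂ (_root_.pd₁ w) x := by
  obtain ⟨E, hE, heq⟩ := h
  have hwE := heq.eventuallyEq_of_mem (isOpen_openStrip.mem_nhds hx)
  rw [(Filter.EventuallyEq.pd₂ hwE).pd₁_eq, (Filter.EventuallyEq.pd₁ hwE).pd₂_eq]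
  exact ((hE.contDiffAt (strip_mem_nhds hx)).of_le (by norm_cast)).pd₁_pd₂_comm

end SmoothOnStrip

section SmoothOnStrip

variable {w : ℝ × ℝ → ℝ}

lemma eqOn_iterate_pd₂_pd₁ (h : SmoothOnStrip w) (n : ℕ) :
    EqOn (pd₂^[n] (pd₁ w)) (pd₁ (pd₂^[n] w)) openStrip := by
  induction n with
  | zero => exact eqOn_refl _ _
  | succ n ih =>
    intro x hx
    rw [Function.iterate_succ_apply', Function.iterate_succ_apply',
      (ih.eventuallyEq_of_mem (isOpen_openStrip.mem_nhds hx)).pd₂_eq,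
      (h.iterate_pd₂ n).pd₁_pd₂_comm hx]

lemma eqOn_pd₂_iterate_pd₁ (h : SmoothOnStrip w) (n : ℕ) :
    EqOn (pd₂ (pd₁^[n] w)) (pd₁^[n] (pd₂ w)) openStrip := by
  induction n with
  | zero => exact eqOn_refl _ _
  | succ n ih =>
    intro x hx
    rw [Function.iterate_succ_apply', Function.iterate_succ_apply',
      ← (h.iterate_pd₁ n).pd₁_pd₂_comm hx,
      (ih.eventuallyEq_of_mem (isOpen_openStrip.mem_nhds hx)).pd₁_eq]

end SmoothOnStrip

section SobolevEmbedding

lemma abs_sub_le_integral_abs_deriv {g g' : ℝ → ℝ} {a b u v : ℝ}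
    (hd : ∀ t ∈ Ioo a b, HasDerivAt g (g' t) t) (hg' : IntegrableOn g' (Ioo a b))
    (hu : u ∈ Ioo a b) (hv : v ∈ Ioo a b) :
    |g v - g u| ≤ ∫ t in Ioo a b, |g' t| := by
  have hsub : uIcc u v ⊆ Ioo a b := ordConnected_Ioo.uIcc_subset hu hv
  rw [← intervalIntegral.integral_eq_sub_of_hasDerivAt (fun t ht => hd t (hsub ht))
    (hg'.mono_set hsub).intervalIntegrable]
  calc |∫ t in u..v, g' t| ≤ ∫ t in uIoc u v, |g' t| :=
        intervalIntegral.norm_integral_le_integral_norm_uIoc (f := g')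
    _ ≤ ∫ t in Ioo a b, |g' t| :=
        setIntegral_mono_set hg'.abs (ae_of_all _ fun _ => abs_nonneg _)
          (uIoc_subset_uIcc.trans hsub).eventuallyLE

lemma abs_le_integral_abs_add_integral_abs_deriv {g g' : ℝ → ℝ}
    (hd : ∀ t ∈ Ioo (0 : ℝ) 1, HasDerivAt g (g' t) t) (hg : IntegrableOn g (Ioo 0 1))
    (hg' : IntegrableOn g' (Ioo 0 1)) {v : ℝ} (hv : v ∈ Ioo (0 : ℝ) 1) :
    |g v| ≤ (∫ t in Ioo 0 1, |g t|) + ∫ t in Ioo 0 1, |g' t| := by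
  have hvol : volume.real (Ioo (0 : ℝ) 1) = 1 := by simp
  have hconst : IntegrableOn (fun _ => ∫ t in Ioo 0 1, |g' t|) (Ioo (0 : ℝ) 1) :=
    integrableOn_const measure_Ioo_lt_top.ne
  calc |g v| = ∫ _ in Ioo (0 : ℝ) 1, |g v| := by simp [hvol]
    _ ≤ ∫ u in Ioo 0 1, (|g u| + ∫ t in Ioo 0 1, |g' t|) := by
        refine setIntegral_mono_on (integrableOn_const measure_Ioo_lt_top.ne)
          (hg.abs.add hconst) measurableSet_Ioo fun u hu => ?_
        linarith [abs_sub_le_integral_abs_deriv hd hg' hu hv, abs_sub_abs_le_abs_sub (g v) (g u)]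
    _ = _ := by rw [integral_add hg.abs hconst, setIntegral_const, hvol, one_smul]

lemma integrableOn_integral_swap_unitSq {h : ℝ × ℝ → ℝ} (hh : IntegrableOn h unitSq) :
    IntegrableOn (fun t => ∫ y in Ioo 0 1, h (y, t)) (Ioo 0 1) ∧
      ∫ t in Ioo (0 : ℝ) 1, ∫ y in Ioo (0 : ℝ) 1, h (y, t) = ∫ x in unitSq, h x := by
  have hprod : (volume.restrict (Ioo (0 : ℝ) 1)).prod (volume.restrict (Ioo (0 : ℝ) 1)) =
      volume.restrict unitSq := by
    rw [Measure.prod_restrict, ← Measure.volume_eq_prod]; rfl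
  have hswap : Integrable (fun z : ℝ × ℝ => h z.swap)
      ((volume.restrict (Ioo (0 : ℝ) 1)).prod (volume.restrict (Ioo (0 : ℝ) 1))) :=
    (hprod ▸ hh : Integrable h _).swap
  exact ⟨hswap.integral_prod_left, (integral_prod _ hswap).symm.trans
    (by rw [integral_prod_swap, hprod])⟩

variable {w : ℝ × ℝ → ℝ}

lemma integral_abs_vert_le (hw : SmoothOnStrip w) {x₁ : ℝ} (hx₁ : x₁ ∈ Ioo (0 : ℝ) 1) :
    ∫ t in Ioo (0 : ℝ) 1, |w (x₁, t)| ≤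
      (∫ x in unitSq, |w x|) + ∫ x in unitSq, |pd₁ w x| := by
  obtain ⟨hi₀, he₀⟩ := integrableOn_integral_swap_unitSq hw.bddCont.integrableOn.abs
  obtain ⟨hi₁, he₁⟩ := integrableOn_integral_swap_unitSq hw.pd₁.bddCont.integrableOn.abs
  rw [← he₀, ← he₁, ← integral_add hi₀ hi₁]
  refine setIntegral_mono_on (hw.bddCont.integrableOn_vert hx₁).abs (hi₀.add hi₁)
    measurableSet_Ioo fun t ht => ?_
  exact abs_le_integral_abs_add_integral_abs_deriv
    (fun y hy => hw.hasDerivAt_pd₁ (x := (y, t)) (mem_openStrip.2 hy))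
    (hw.bddCont.integrableOn_horiz ht) (hw.pd₁.bddCont.integrableOn_horiz ht) hx₁

lemma abs_le_sum_integral_abs (hw : SmoothOnStrip w) {x : ℝ × ℝ} (hx : x ∈ unitSq) :
    |w x| ≤ (∫ y in unitSq, |w y|) + (∫ y in unitSq, |pd₁ w y|) +
      (∫ y in unitSq, |pd₂ w y|) + ∫ y in unitSq, |pd₁ (pd₂ w) y| := by
  have hvert := abs_le_integral_abs_add_integral_abs_deriv
    (fun t _ => hw.hasDerivAt_pd₂ (x := (x.1, t)) (mem_openStrip.2 hx.1))
    (hw.bddCont.integrableOn_vert hx.1) (hw.pd₂.bddCont.integrableOn_vert hx.1) hx.2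
  linarith [integral_abs_vert_le hw hx.1, integral_abs_vert_le hw.pd₂ hx.1]

end SobolevEmbedding

section SobolevNorm

lemma integral_abs_le_l2 {g : ℝ × ℝ → ℝ} (hg : IntegrableOn g unitSq)
    (hg2 : IntegrableOn (fun x => g x ^ 2) unitSq) :
    ∫ x in unitSq, |g x| ≤ l2 g := by
  have hjensen := (even_two.convexOn_pow (𝕜 := ℝ)).map_integral_le (μ := volume.restrict unitSq)
    (continuous_pow 2).continuousOn isClosed_univ (ae_of_all _ fun _ => mem_univ _) hg.abs
    (by simpa [Function.comp_def, IntegrableOn] using hg2)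
  simp only [sq_abs] at hjensen
  exact Real.le_sqrt_of_sq_le hjensen

lemma L2sq_nonneg (g : ℝ × ℝ → ℝ) : 0 ≤ L2sq g :=
  integral_nonneg fun x => sq_nonneg (g x)

lemma L2sq_congr {g₁ g₂ : ℝ × ℝ → ℝ} (h : EqOn g₁ g₂ unitSq) : L2sq g₁ = L2sq g₂ :=
  setIntegral_congr_fun measurableSet_unitSq fun x hx => by rw [h hx]

lemma Hsq_nonneg (m : ℕ) (w : ℝ × ℝ → ℝ) : 0 ≤ Hsq m w :=
  Finset.sum_nonneg fun _ _ => Finset.sum_nonneg fun _ _ => L2sq_nonneg _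

lemma L2sq_le_Hsq {m b c : ℕ} (hbc : b + c ≤ m) (w : ℝ × ℝ → ℝ) :
    L2sq (pd₁^[b] (pd₂^[c] w)) ≤ Hsq m w :=
  calc L2sq (pd₁^[b] (pd₂^[c] w))
      ≤ ∑ c' ∈ Finset.range (m + 1 - b), L2sq (pd₁^[b] (pd₂^[c'] w)) :=
        Finset.single_le_sum (f := fun c' => L2sq (pd₁^[b] (pd₂^[c'] w)))
          (fun _ _ => L2sq_nonneg _) (Finset.mem_range.2 (by omega))
    _ ≤ Hsq m w :=
        Finset.single_le_sum
          (f := fun b' => ∑ c' ∈ Finset.range (m + 1 - b'), L2sq (pd₁^[b'] (pd₂^[c'] w)))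
          (fun _ _ => Finset.sum_nonneg fun _ _ => L2sq_nonneg _) (Finset.mem_range.2 (by omega))

variable {w F : ℝ × ℝ → ℝ}

lemma L2sq_iterate_pd₂_pd₁_le_sqrt_Hsq_sq (hF : SmoothOnStrip F) (n : ℕ) :
    L2sq (pd₂^[n] (pd₁ F)) ≤ √(Hsq (n + 1) F) ^ 2 := by
  rw [Real.sq_sqrt (Hsq_nonneg _ _),
    L2sq_congr ((eqOn_iterate_pd₂_pd₁ hF n).mono unitSq_subset_openStrip)]
  exact L2sq_le_Hsq (b := 1) (by omega) F

lemma L2sq_iterate_pd₂_pd₂_le_sqrt_Hsq_sq (n : ℕ) (F : ℝ × ℝ → ℝ) :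
    L2sq (pd₂^[n] (pd₂ F)) ≤ √(Hsq (n + 1) F) ^ 2 := by
  rw [Real.sq_sqrt (Hsq_nonneg _ _), ← Function.iterate_succ_apply]
  exact L2sq_le_Hsq (b := 0) (c := n + 1) (by omega) F

lemma integral_abs_le_sqrt_Hsq (hw : SmoothOnStrip w) {b c m : ℕ}
    (h : EqOn w (pd₁^[b] (pd₂^[c] F)) openStrip) (hbc : b + c ≤ m) :
    ∫ x in unitSq, |w x| ≤ √(Hsq m F) := by
  have hL2 : L2sq w ≤ Hsq m F := by
    rw [L2sq_congr (h.mono unitSq_subset_openStrip)]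
    exact L2sq_le_Hsq hbc F
  exact (integral_abs_le_l2 hw.bddCont.integrableOn hw.bddCont.integrableOn_sq).trans
    (Real.sqrt_le_sqrt hL2)

lemma abs_iterate_le (hF : SmoothOnStrip F) {b c m : ℕ} (hbc : b + c + 2 ≤ m) {x : ℝ × ℝ}
    (hx : x ∈ unitSq) : |pd₁^[b] (pd₂^[c] F) x| ≤ 4 * √(Hsq m F) := by
  have hw := (hF.iterate_pd₂ c).iterate_pd₁ b
  have h₁ : EqOn (pd₁ (pd₁^[b] (pd₂^[c] F))) (pd₁^[b + 1] (pd₂^[c] F)) openStrip :=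
    fun _ _ => by rw [Function.iterate_succ_apply']
  have h₂ : EqOn (pd₂ (pd₁^[b] (pd₂^[c] F))) (pd₁^[b] (pd₂^[c + 1] F)) openStrip := by
    rw [Function.iterate_succ_apply']
    exact eqOn_pd₂_iterate_pd₁ (hF.iterate_pd₂ c) b
  have h₃ : EqOn (pd₁ (pd₂ (pd₁^[b] (pd₂^[c] F)))) (pd₁^[b + 1] (pd₂^[c + 1] F)) openStrip :=
    fun y hy => by
      rw [Function.iterate_succ_apply',
        (h₂.eventuallyEq_of_mem (isOpen_openStrip.mem_nhds hy)).pd₁_eq]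
  linarith [abs_le_sum_integral_abs hw hx,
    integral_abs_le_sqrt_Hsq hw (eqOn_refl _ _) (by omega : b + c ≤ m),
    integral_abs_le_sqrt_Hsq hw.pd₁ h₁ (by omega : b + 1 + c ≤ m),
    integral_abs_le_sqrt_Hsq hw.pd₂ h₂ (by omega : b + (c + 1) ≤ m),
    integral_abs_le_sqrt_Hsq hw.pd₂.pd₁ h₃ (by omega : b + 1 + (c + 1) ≤ m)]

lemma abs_iterate_pd₂_pd₁_le (hF : SmoothOnStrip F) {k m : ℕ} (hk : k + 3 ≤ m) {x : ℝ × ℝ}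
    (hx : x ∈ unitSq) : |pd₂^[k] (pd₁ F) x| ≤ 4 * √(Hsq m F) := by
  rw [eqOn_iterate_pd₂_pd₁ hF k (unitSq_subset_openStrip hx)]
  exact abs_iterate_le hF (b := 1) (by omega) hx

lemma abs_iterate_pd₂_pd₂_le (hF : SmoothOnStrip F) {k m : ℕ} (hk : k + 3 ≤ m) {x : ℝ × ℝ}
    (hx : x ∈ unitSq) : |pd₂^[k] (pd₂ F) x| ≤ 4 * √(Hsq m F) := by
  rw [← Function.iterate_succ_apply]
  exact abs_iterate_le hF (b := 0) (c := k + 1) (by omega) hx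

end SobolevNorm

lemma integral_unitSq_eq_zero_of_hasDerivAt {H H' : ℝ × ℝ → ℝ}
    (hd : ∀ x ∈ openStrip, HasDerivAt (fun t => H (x.1, t)) (H' x) x.2) (hH' : BddCont H')
    (hper : Per1 H) : ∫ x in unitSq, H' x = 0 := by
  have hslice : ∀ x₁ ∈ Ioo (0 : ℝ) 1, ∫ x₂ in Ioo (0 : ℝ) 1, H' (x₁, x₂) = 0 := by
    intro x₁ hx₁
    have hint := hH'.integrableOn_vert hx₁
    rw [← integral_Ioc_eq_integral_Ioo, ← intervalIntegral.integral_of_le zero_le_one,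
      intervalIntegral.integral_eq_sub_of_hasDerivAt (f := fun t => H (x₁, t))
        (fun t _ => hd (x₁, t) (mem_openStrip.2 hx₁))
        ((intervalIntegrable_iff_integrableOn_Ioo_of_le zero_le_one).2 hint),
      show (1 : ℝ) = 0 + 1 by norm_num, hper, sub_self]
  rw [unitSq, Measure.volume_eq_prod, setIntegral_prod _ (by
    rw [← Measure.volume_eq_prod]; exact hH'.integrableOn)]
  exact (setIntegral_congr_fun measurableSet_Ioo hslice).trans (by simp)

lemma integral_mul_pd₂_mul_add_eq_neg {G p q : ℝ × ℝ → ℝ}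
    (hG : ∀ x ∈ openStrip, DifferentiableAt ℝ (fun t => G (x.1, t)) x.2) (hGb : BddCont G)
    (hG'b : BddCont (pd₂ G)) (hGper : Per1 G) (hp : SmoothOnStrip p) (hq : SmoothOnStrip q)
    (hpper : Per1 p) (hqper : Per1 q) :
    ∫ x in unitSq, G x * (pd₂ p x * q x + p x * pd₂ q x) =
      -∫ x in unitSq, pd₂ G x * (p x * q x) := by
  have hX := hG'b.mul (hp.bddCont.mul hq.bddCont)
  have hY := hGb.mul ((hp.pd₂.bddCont.mul hq.bddCont).add (hp.bddCont.mul hq.pd₂.bddCont))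
  have hzero := integral_unitSq_eq_zero_of_hasDerivAt (H := fun x => G x * (p x * q x))
    (H' := fun x => pd₂ G x * (p x * q x) + G x * (pd₂ p x * q x + p x * pd₂ q x))
    (fun x hx => (hG x hx).hasDerivAt.mul ((hp.hasDerivAt_pd₂ hx).mul (hq.hasDerivAt_pd₂ hx)))
    (hX.add hY) (hGper.mul (hpper.mul hqper))
  rw [integral_add hX.integrableOn hY.integrableOn] at hzero
  linarith

lemma abs_integral_mul_mul_le {h p q : ℝ × ℝ → ℝ} {B : ℝ} (hh : ContinuousOn h openStrip)
    (hB : ∀ x ∈ unitSq, |h x| ≤ B) (hp : BddCont p) (hq : BddCont q) :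
    |∫ x in unitSq, h x * (p x * q x)| ≤ B * (L2sq p + L2sq q) / 2 := by
  have hB0 : 0 ≤ B := (abs_nonneg _).trans (hB (1 / 2, 1 / 2) (by norm_num [unitSq]))
  have hp2 := hp.integrableOn_sq
  have hq2 := hq.integrableOn_sq
  calc |∫ x in unitSq, h x * (p x * q x)| ≤ ∫ x in unitSq, |h x * (p x * q x)| :=
        abs_integral_le_integral_abs
    _ ≤ ∫ x in unitSq, B / 2 * (p x ^ 2 + q x ^ 2) := by
        refine setIntegral_mono_on (BddCont.mul ⟨hh, B, hB⟩ (hp.mul hq)).integrableOn.abs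
          ((hp2.add hq2).const_mul _) measurableSet_unitSq fun x hx => ?_
        rw [abs_mul, abs_mul]
        have hpq : |p x| * |q x| ≤ (p x ^ 2 + q x ^ 2) / 2 := by
          nlinarith [sq_nonneg (|p x| - |q x|), sq_abs (p x), sq_abs (q x)]
        nlinarith [mul_le_mul (hB x hx) hpq (by positivity) hB0]
    _ = B * (L2sq p + L2sq q) / 2 := by
        rw [integral_const_mul, integral_add hp2 hq2, L2sq, L2sq]; ring

def PeriodicX₂ (c : (ℝ × ℝ) × ℝ × ℝ → ℝ) : Prop :=
  ∀ (x₁ x₂ : ℝ) (z : ℝ × ℝ), c ((x₁, x₂ + 1), z) = c ((x₁, x₂), z)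

lemma PerA.periodicX₂_A₁ {a : (ℝ × ℝ) × ℝ × ℝ → ℝ × ℝ} (h : PerA a) : PeriodicX₂ (A₁ a) :=
  fun x₁ x₂ z => by simp only [A₁, h x₁ x₂ z]

lemma PerA.periodicX₂_A₂ {a : (ℝ × ℝ) × ℝ × ℝ → ℝ × ℝ} (h : PerA a) : PeriodicX₂ (A₂ a) :=
  fun x₁ x₂ z => by simp only [A₂, h x₁ x₂ z]

namespace PeriodicX₂

variable {c : (ℝ × ℝ) × ℝ × ℝ → ℝ}

lemma dz₁ (h : PeriodicX₂ c) : PeriodicX₂ (dz₁ c) := fun x₁ x₂ z => by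
  simp only [_root_.dz₁, h x₁ x₂]

lemma dz₂ (h : PeriodicX₂ c) : PeriodicX₂ (dz₂ c) := fun x₁ x₂ z => by
  simp only [_root_.dz₂, h x₁ x₂]

lemma comp_gradc (h : PeriodicX₂ c) {F : ℝ × ℝ → ℝ} (hF : Per1 F) :
    Per1 (fun x => c (x, gradc F x)) := fun x₁ x₂ => by
  simp only [gradc, hF.pd₁ x₁ x₂, hF.pd₂ x₁ x₂, h x₁ x₂]

end PeriodicX₂

section SlabCalculus

variable {c c' : (ℝ × ℝ) × ℝ × ℝ → ℝ} {F : ℝ × ℝ → ℝ}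

lemma dz₁_congr (h : EqOn c c' slab4) {w : (ℝ × ℝ) × ℝ × ℝ}
    (hw : w ∈ slab4) : dz₁ c w = dz₁ c' w := by
  simp only [dz₁]
  congr 1
  funext t
  exact h ⟨hw.1, trivial⟩

lemma dz₂_congr (h : EqOn c c' slab4) {w : (ℝ × ℝ) × ℝ × ℝ}
    (hw : w ∈ slab4) : dz₂ c w = dz₂ c' w := by
  simp only [dz₂]
  congr 1
  funext t
  exact h ⟨hw.1, trivial⟩

lemma dz₁_eq_fderivWithin (hc : DifferentiableOn ℝ c slab4)
    {w : (ℝ × ℝ) × ℝ × ℝ} (hw : w ∈ slab4) :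
    dz₁ c w = fderivWithin ℝ c slab4 w ((0, 0), (1, 0)) := by
  have hline : HasDerivAt (fun t : ℝ => (w.1, (t, w.2.2))) ((0, 0), (1, 0)) w.2.1 :=
    (hasDerivAt_const _ _).prodMk ((hasDerivAt_id _).prodMk (hasDerivAt_const _ _))
  have hmaps : MapsTo (fun t : ℝ => (w.1, (t, w.2.2))) univ slab4 := fun _ _ => ⟨hw.1, trivial⟩
  exact (((hc w hw).hasFDerivWithinAt.comp_hasDerivWithinAt w.2.1 hline.hasDerivWithinAt
    hmaps).hasDerivAt univ_mem).deriv

lemma dz₂_eq_fderivWithin (hc : DifferentiableOn ℝ c slab4)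
    {w : (ℝ × ℝ) × ℝ × ℝ} (hw : w ∈ slab4) :
    dz₂ c w = fderivWithin ℝ c slab4 w ((0, 0), (0, 1)) := by
  have hline : HasDerivAt (fun t : ℝ => (w.1, (w.2.1, t))) ((0, 0), (0, 1)) w.2.2 :=
    (hasDerivAt_const _ _).prodMk ((hasDerivAt_const _ _).prodMk (hasDerivAt_id _))
  have hmaps : MapsTo (fun t : ℝ => (w.1, (w.2.1, t))) univ slab4 := fun _ _ => ⟨hw.1, trivial⟩
  exact (((hc w hw).hasFDerivWithinAt.comp_hasDerivWithinAt w.2.2 hline.hasDerivWithinAt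
    hmaps).hasDerivAt univ_mem).deriv

lemma ContDiffOn.dz₁ {n : WithTop ℕ∞}
    (hc : ContDiffOn ℝ (n + 1) c slab4) : ContDiffOn ℝ n (dz₁ c) slab4 :=
  ((hc.fderivWithin uniqueDiffOn_slab4 le_rfl).clm_apply contDiffOn_const).congr
    fun _ hw => dz₁_eq_fderivWithin (hc.differentiableOn (by simp)) hw

lemma ContDiffOn.dz₂ {n : WithTop ℕ∞}
    (hc : ContDiffOn ℝ (n + 1) c slab4) : ContDiffOn ℝ n (dz₂ c) slab4 :=
  ((hc.fderivWithin uniqueDiffOn_slab4 le_rfl).clm_apply contDiffOn_const).congr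
    fun _ hw => dz₂_eq_fderivWithin (hc.differentiableOn (by simp)) hw

/-- The velocity of `t ↦ ((x.1, t), ∇F (x.1, t))` at `t = x.2`. -/
def pd₂GradGraph (F : ℝ × ℝ → ℝ) (x : ℝ × ℝ) : (ℝ × ℝ) × ℝ × ℝ :=
  ((0, 1), (pd₂ (pd₁ F) x, pd₂ (pd₂ F) x))

lemma norm_gradc (F : ℝ × ℝ → ℝ) (x : ℝ × ℝ) : ‖gradc F x‖ = max |pd₁ F x| |pd₂ F x| := rfl

lemma norm_pd₂GradGraph (F : ℝ × ℝ → ℝ) (x : ℝ × ℝ) :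
    ‖pd₂GradGraph F x‖ = max 1 (max |pd₂ (pd₁ F) x| |pd₂ (pd₂ F) x|) := by
  simp [pd₂GradGraph, Prod.norm_def]

lemma hasDerivAt_comp_gradc (hc : DifferentiableOn ℝ c slab4) (hF : SmoothOnStrip F)
    {x : ℝ × ℝ} (hx : x ∈ openStrip) :
    HasDerivAt (fun t => c ((x.1, t), gradc F (x.1, t)))
      (fderivWithin ℝ c slab4 (x, gradc F x) (pd₂GradGraph F x)) x.2 := by
  have hcurve : HasDerivAt (fun t => ((x.1, t), gradc F (x.1, t))) (pd₂GradGraph F x) x.2 :=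
    ((hasDerivAt_const _ _).prodMk (hasDerivAt_id _)).prodMk
      ((hF.pd₁.hasDerivAt_pd₂ hx).prodMk (hF.pd₂.hasDerivAt_pd₂ hx))
  have hmaps : MapsTo (fun t => ((x.1, t), gradc F (x.1, t))) univ slab4 :=
    fun _ _ => ⟨⟨Ioo_subset_Icc_self (mem_openStrip.1 hx), trivial⟩, trivial⟩
  exact ((hc _ (hmaps (mem_univ x.2))).hasFDerivWithinAt.comp_hasDerivWithinAt x.2
    hcurve.hasDerivWithinAt hmaps).hasDerivAt univ_mem

lemma ContinuousOn.comp_gradc {E : Type*} [TopologicalSpace E] {g : (ℝ × ℝ) × ℝ × ℝ → E}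
    (hg : ContinuousOn g slab4) (hF : SmoothOnStrip F) :
    ContinuousOn (fun x => g (x, gradc F x)) openStrip :=
  hg.comp (continuousOn_id.prodMk (hF.pd₁.continuousOn.prodMk hF.pd₂.continuousOn))
    fun _ hx => ⟨openStrip_subset_strip hx, trivial⟩

lemma exists_norm_le_of_continuousOn_slab4 {E : Type*} [NormedAddCommGroup E]
    {g : (ℝ × ℝ) × ℝ × ℝ → E} (hg : ContinuousOn g slab4) (R : ℝ) :
    ∃ M, 0 ≤ M ∧ ∀ x ∈ unitSq, ∀ z : ℝ × ℝ, ‖z‖ ≤ R → ‖g (x, z)‖ ≤ M := by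
  have hK : (Icc (0 : ℝ) 1 ×ˢ Icc (0 : ℝ) 1) ×ˢ Metric.closedBall (0 : ℝ × ℝ) R ⊆ slab4 :=
    fun w hw => ⟨⟨hw.1.1, trivial⟩, trivial⟩
  obtain ⟨M, hM⟩ := ((isCompact_Icc.prod isCompact_Icc).prod
    (isCompact_closedBall _ _)).exists_bound_of_continuousOn (hg.mono hK)
  exact ⟨max M 0, le_max_right _ _, fun x hx z hz => (hM _ ⟨unitSq_subset_Icc hx,
    mem_closedBall_zero_iff.2 hz⟩).trans (le_max_left _ _)⟩

lemma exists_bound_comp_of_contDiffOn (hc : ContDiffOn ℝ 1 c slab4) (R : ℝ) :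
    ∃ M, 0 ≤ M ∧ ∀ x ∈ unitSq, ∀ z : ℝ × ℝ, ‖z‖ ≤ R →
      |c (x, z)| ≤ M ∧ ‖fderivWithin ℝ c slab4 (x, z)‖ ≤ M := by
  obtain ⟨M₀, hM₀, h₀⟩ := exists_norm_le_of_continuousOn_slab4 hc.continuousOn R
  obtain ⟨M₁, -, h₁⟩ := exists_norm_le_of_continuousOn_slab4
    (hc.continuousOn_fderivWithin uniqueDiffOn_slab4 le_rfl) R
  exact ⟨max M₀ M₁, hM₀.trans (le_max_left _ _), fun x hx z hz =>
    ⟨(h₀ x hx z hz).trans (le_max_left _ _), (h₁ x hx z hz).trans (le_max_right _ _)⟩⟩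

lemma bddCont_comp_gradc (hc : ContinuousOn c slab4) (hF : SmoothOnStrip F) :
    BddCont (fun x => c (x, gradc F x)) := by
  obtain ⟨-, B₁, hB₁⟩ := hF.pd₁.bddCont
  obtain ⟨-, B₂, hB₂⟩ := hF.pd₂.bddCont
  obtain ⟨M, -, hM⟩ := exists_norm_le_of_continuousOn_slab4 hc (max B₁ B₂)
  exact ⟨hc.comp_gradc hF, M, fun x hx => hM x hx _ (by
    rw [norm_gradc]; exact max_le_max (hB₁ x hx) (hB₂ x hx))⟩

lemma bddCont_fderivWithin_comp_gradc (hc : ContDiffOn ℝ 1 c slab4) (hF : SmoothOnStrip F) :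
    BddCont (fun x => fderivWithin ℝ c slab4 (x, gradc F x) (pd₂GradGraph F x)) := by
  obtain ⟨-, B₁, hB₁⟩ := hF.pd₁.bddCont
  obtain ⟨-, B₂, hB₂⟩ := hF.pd₂.bddCont
  obtain ⟨-, B₃, hB₃⟩ := hF.pd₁.pd₂.bddCont
  obtain ⟨-, B₄, hB₄⟩ := hF.pd₂.pd₂.bddCont
  have hDc := hc.continuousOn_fderivWithin uniqueDiffOn_slab4 le_rfl
  obtain ⟨M, hM, hDM⟩ := exists_norm_le_of_continuousOn_slab4 hDc (max B₁ B₂)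
  refine ⟨(hDc.comp_gradc hF).clm_apply
    (continuousOn_const.prodMk (hF.pd₁.pd₂.continuousOn.prodMk hF.pd₂.pd₂.continuousOn)),
    M * max 1 (max B₃ B₄), fun x hx => ?_⟩
  rw [← Real.norm_eq_abs]
  refine ((fderivWithin ℝ c slab4 _).le_opNorm _).trans (mul_le_mul (hDM x hx _ ?_) ?_
    (norm_nonneg _) hM)
  · rw [norm_gradc]; exact max_le_max (hB₁ x hx) (hB₂ x hx)
  · rw [norm_pd₂GradGraph]; exact max_le_max le_rfl (max_le_max (hB₃ x hx) (hB₄ x hx))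

end SlabCalculus

/-- The part of `∂₂ (b (x, ∇F x))` that passes through the slot `z = ∇F x`. -/
def pd₂ThroughGrad (b : (ℝ × ℝ) × ℝ × ℝ → ℝ) (F : ℝ × ℝ → ℝ) (x : ℝ × ℝ) : ℝ :=
  pd₂ (pd₁ F) x * dz₁ b (x, gradc F x) + pd₂ (pd₂ F) x * dz₂ b (x, gradc F x)

section pd₂ThroughGrad

variable {b : (ℝ × ℝ) × ℝ × ℝ → ℝ} {F : ℝ × ℝ → ℝ}

lemma hasDerivAt_pd₂ThroughGrad (hb : ContDiffOn ℝ 2 b slab4) (hF : SmoothOnStrip F)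
    {x : ℝ × ℝ} (hx : x ∈ openStrip) :
    HasDerivAt (fun t => pd₂ThroughGrad b F (x.1, t))
      (pd₂ (pd₂ (pd₁ F)) x * dz₁ b (x, gradc F x) +
        pd₂ (pd₁ F) x * fderivWithin ℝ (dz₁ b) slab4 (x, gradc F x) (pd₂GradGraph F x) +
        (pd₂ (pd₂ (pd₂ F)) x * dz₂ b (x, gradc F x) +
        pd₂ (pd₂ F) x * fderivWithin ℝ (dz₂ b) slab4 (x, gradc F x) (pd₂GradGraph F x))) x.2 :=
  ((hF.pd₁.pd₂.hasDerivAt_pd₂ hx).mul (hasDerivAt_comp_gradc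
      (hb.dz₁ (n := 1)).differentiableOn_one hF hx)).add
    ((hF.pd₂.pd₂.hasDerivAt_pd₂ hx).mul (hasDerivAt_comp_gradc
      (hb.dz₂ (n := 1)).differentiableOn_one hF hx))

lemma bddCont_pd₂ThroughGrad (hb : ContDiffOn ℝ 2 b slab4) (hF : SmoothOnStrip F) :
    BddCont (pd₂ThroughGrad b F) :=
  (hF.pd₁.pd₂.bddCont.mul (bddCont_comp_gradc (hb.dz₁ (n := 1)).continuousOn hF)).add
    (hF.pd₂.pd₂.bddCont.mul (bddCont_comp_gradc (hb.dz₂ (n := 1)).continuousOn hF))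

lemma bddCont_pd₂_pd₂ThroughGrad (hb : ContDiffOn ℝ 2 b slab4) (hF : SmoothOnStrip F) :
    BddCont (pd₂ (pd₂ThroughGrad b F)) :=
  BddCont.congr
    (((hF.pd₁.pd₂.pd₂.bddCont.mul (bddCont_comp_gradc (hb.dz₁ (n := 1)).continuousOn hF)).add
      (hF.pd₁.pd₂.bddCont.mul (bddCont_fderivWithin_comp_gradc (hb.dz₁ (n := 1)) hF))).add
    ((hF.pd₂.pd₂.pd₂.bddCont.mul (bddCont_comp_gradc (hb.dz₂ (n := 1)).continuousOn hF)).add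
      (hF.pd₂.pd₂.bddCont.mul (bddCont_fderivWithin_comp_gradc (hb.dz₂ (n := 1)) hF))))
    fun _ hx => (hasDerivAt_pd₂ThroughGrad hb hF hx).deriv.symm

lemma PeriodicX₂.per1_pd₂ThroughGrad (hb : PeriodicX₂ b) (hF : Per1 F) :
    Per1 (pd₂ThroughGrad b F) :=
  (hF.pd₁.pd₂.mul (hb.dz₁.comp_gradc hF)).add (hF.pd₂.pd₂.mul (hb.dz₂.comp_gradc hF))

lemma exists_abs_pd₂_pd₂ThroughGrad_le (hb : ContDiffOn ℝ 2 b slab4) :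
    ∃ K, 0 ≤ K ∧ ∀ (F : ℝ × ℝ → ℝ) (ε : ℝ), SmoothOnStrip F → ε ≤ 4 →
      (∀ k ≤ 2, ∀ x ∈ unitSq, |pd₂^[k] (pd₁ F) x| ≤ ε ∧ |pd₂^[k] (pd₂ F) x| ≤ ε) →
      ∀ x ∈ unitSq, |pd₂ (pd₂ThroughGrad b F) x| ≤ K * ε := by
  obtain ⟨M₁, hM₁, h₁⟩ := exists_bound_comp_of_contDiffOn (hb.dz₁ (n := 1)) 4
  obtain ⟨M₂, hM₂, h₂⟩ := exists_bound_comp_of_contDiffOn (hb.dz₂ (n := 1)) 4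
  refine ⟨5 * (M₁ + M₂), by positivity, fun F ε hF hε hbd x hx => ?_⟩
  obtain ⟨g₁, g₂⟩ := hbd 0 (by norm_num) x hx
  obtain ⟨v₁, v₂⟩ := hbd 1 (by norm_num) x hx
  obtain ⟨w₁, w₂⟩ := hbd 2 le_rfl x hx
  simp only [Function.iterate_zero, Function.iterate_succ,
    Function.comp_apply, id] at g₁ g₂ v₁ v₂ w₁ w₂
  have hε0 : 0 ≤ ε := (abs_nonneg _).trans g₁
  have hgrad : ‖gradc F x‖ ≤ 4 := by
    rw [norm_gradc]; exact max_le (g₁.trans hε) (g₂.trans hε)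
  have hvel : ‖pd₂GradGraph F x‖ ≤ 4 := by
    rw [norm_pd₂GradGraph]; exact max_le (by norm_num) (max_le (v₁.trans hε) (v₂.trans hε))
  have happly : ∀ (D : ((ℝ × ℝ) × ℝ × ℝ) →L[ℝ] ℝ) {M : ℝ}, ‖D‖ ≤ M →
      |D (pd₂GradGraph F x)| ≤ M * 4 := fun D M hD =>
    (D.le_opNorm _).trans (mul_le_mul hD hvel (norm_nonneg _) ((norm_nonneg D).trans hD))
  obtain ⟨hC₁, hD₁⟩ := h₁ x hx _ hgrad
  obtain ⟨hC₂, hD₂⟩ := h₂ x hx _ hgrad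
  have e₁ := mul_le_mul w₁ hC₁ (abs_nonneg _) hε0
  have e₂ := mul_le_mul v₁ (happly _ hD₁) (abs_nonneg _) hε0
  have e₃ := mul_le_mul w₂ hC₂ (abs_nonneg _) hε0
  have e₄ := mul_le_mul v₂ (happly _ hD₂) (abs_nonneg _) hε0
  rw [show pd₂ (pd₂ThroughGrad b F) x = _ from
    (hasDerivAt_pd₂ThroughGrad hb hF (unitSq_subset_openStrip hx)).deriv]
  refine ((abs_add_le _ _).trans (add_le_add (abs_add_le _ _) (abs_add_le _ _))).trans ?_
  simp only [abs_mul]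
  linarith

end pd₂ThroughGrad

theorem exists_abs_integral_pd₂ThroughGrad_mul_le {b : (ℝ × ℝ) × ℝ × ℝ → ℝ}
    (hb : ContDiffOn ℝ 2 b slab4) (hbper : PeriodicX₂ b) :
    ∃ K, 0 ≤ K ∧ ∀ {m : ℕ} {F p q : ℝ × ℝ → ℝ}, 5 ≤ m → SmoothOnStrip F → Per1 F →
      √(Hsq m F) ≤ 1 → SmoothOnStrip p → SmoothOnStrip q → Per1 p → Per1 q →
      |∫ x in unitSq, pd₂ThroughGrad b F x * (pd₂ p x * q x + p x * pd₂ q x)| ≤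
        K * √(Hsq m F) * (L2sq p + L2sq q) := by
  obtain ⟨K, hK, hbound⟩ := exists_abs_pd₂_pd₂ThroughGrad_le hb
  refine ⟨2 * K, by positivity, fun {m F p q} hm hF hFper hnorm hp hq hpper hqper => ?_⟩
  have hsup : ∀ k ≤ 2, ∀ x ∈ unitSq,
      |pd₂^[k] (pd₁ F) x| ≤ 4 * √(Hsq m F) ∧ |pd₂^[k] (pd₂ F) x| ≤ 4 * √(Hsq m F) :=
    fun k hk x hx => ⟨abs_iterate_pd₂_pd₁_le hF (by omega) hx,
      abs_iterate_pd₂_pd₂_le hF (by omega) hx⟩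
  rw [integral_mul_pd₂_mul_add_eq_neg
    (fun x hx => (hasDerivAt_pd₂ThroughGrad hb hF hx).differentiableAt)
    (bddCont_pd₂ThroughGrad hb hF) (bddCont_pd₂_pd₂ThroughGrad hb hF)
    (hbper.per1_pd₂ThroughGrad hFper) hp hq hpper hqper, abs_neg]
  exact (abs_integral_mul_mul_le (bddCont_pd₂_pd₂ThroughGrad hb hF).1
    (hbound F _ hF (by linarith) hsup) hp.bddCont hq.bddCont).trans_eq (by ring)

section Coefficients

variable {a : (ℝ × ℝ) × ℝ × ℝ → ℝ × ℝ}

lemma contDiffOn_dz₁_A₁ (ha : ContDiffOn ℝ 3 a slab4) :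
    ContDiffOn ℝ 2 (dz₁ (A₁ a)) slab4 :=
  (contDiff_fst.comp_contDiffOn ha).dz₁ (n := 2)

lemma contDiffOn_dz₂_A₁ (ha : ContDiffOn ℝ 3 a slab4) :
    ContDiffOn ℝ 2 (dz₂ (A₁ a)) slab4 :=
  (contDiff_fst.comp_contDiffOn ha).dz₂ (n := 2)

lemma contDiffOn_dz₂_A₂ (ha : ContDiffOn ℝ 3 a slab4) :
    ContDiffOn ℝ 2 (dz₂ (A₂ a)) slab4 :=
  (contDiff_snd.comp_contDiffOn ha).dz₂ (n := 2)

lemma I₂_eq (hsym : SymA a) (n : ℕ) (F : ℝ × ℝ → ℝ) :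
    I₂ (n + 1) a F = (n + 1) * ∫ x in unitSq, pd₂ThroughGrad (dz₂ (A₁ a)) F x *
      (pd₂ (pd₂^[n] (pd₁ F)) x * pd₂^[n] (pd₂ F) x +
        pd₂^[n] (pd₁ F) x * pd₂ (pd₂^[n] (pd₂ F)) x) := by
  rw [I₂, ← integral_const_mul]
  refine setIntegral_congr_fun measurableSet_unitSq fun x hx => ?_
  have hw : (x, gradc F x) ∈ slab4 := ⟨⟨Ioo_subset_Icc_self hx.1, trivial⟩, trivial⟩
  simp only [pd₂ThroughGrad, Nat.add_sub_cancel, Function.iterate_succ_apply',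
    ← dz₁_congr hsym hw, ← dz₂_congr hsym hw]
  push_cast
  ring

lemma I₃_eq (n : ℕ) (F : ℝ × ℝ → ℝ) :
    I₃ (n + 1) a F = (n + 1) / 2 * ∫ x in unitSq,
      (pd₂ThroughGrad (dz₁ (A₁ a)) F x *
        (pd₂ (pd₂^[n] (pd₁ F)) x * pd₂^[n] (pd₁ F) x +
          pd₂^[n] (pd₁ F) x * pd₂ (pd₂^[n] (pd₁ F)) x) +
      pd₂ThroughGrad (dz₂ (A₂ a)) F x *
        (pd₂ (pd₂^[n] (pd₂ F)) x * pd₂^[n] (pd₂ F) x +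
          pd₂^[n] (pd₂ F) x * pd₂ (pd₂^[n] (pd₂ F)) x)) := by
  rw [I₃, ← integral_const_mul]
  refine setIntegral_congr_fun measurableSet_unitSq fun x _ => ?_
  simp only [pd₂ThroughGrad, Nat.add_sub_cancel, Function.iterate_succ_apply']
  push_cast
  ring

end Coefficients

section Estimates

variable {a : (ℝ × ℝ) × ℝ × ℝ → ℝ × ℝ} {s : ℕ}

lemma exists_abs_I₂_le (ha : ContDiffOn ℝ 3 a slab4) (haper : PerA a) (hsym : SymA a)
    (hs : 5 ≤ s) : ∃ C, 0 ≤ C ∧ ∀ F : ℝ × ℝ → ℝ, SmoothOnStrip F → Per1 F →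
      √(Hsq s F) ≤ 1 → |I₂ s a F| ≤ C * √(Hsq s F) ^ 3 := by
  obtain ⟨n, rfl⟩ : ∃ n, s = n + 1 := ⟨s - 1, by omega⟩
  obtain ⟨K, hK, hbound⟩ := exists_abs_integral_pd₂ThroughGrad_mul_le
    (contDiffOn_dz₂_A₁ ha) haper.periodicX₂_A₁.dz₂
  refine ⟨(n + 1) * (2 * K), by positivity, fun F hF hper hnorm => ?_⟩
  have e := (hbound hs hF hper hnorm (hF.pd₁.iterate_pd₂ n) (hF.pd₂.iterate_pd₂ n)
    (hper.pd₁.iterate_pd₂ n) (hper.pd₂.iterate_pd₂ n)).trans (mul_le_mul_of_nonneg_left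
      (add_le_add (L2sq_iterate_pd₂_pd₁_le_sqrt_Hsq_sq hF n)
        (L2sq_iterate_pd₂_pd₂_le_sqrt_Hsq_sq n F)) (by positivity))
  rw [I₂_eq hsym, abs_mul, abs_of_nonneg (by positivity)]
  calc _ ≤ (n + 1) * (K * √(Hsq (n + 1) F) * (√(Hsq (n + 1) F) ^ 2 + √(Hsq (n + 1) F) ^ 2)) :=
        mul_le_mul_of_nonneg_left e (by positivity)
    _ = _ := by ring

lemma exists_abs_I₃_le (ha : ContDiffOn ℝ 3 a slab4) (haper : PerA a) (hs : 5 ≤ s) :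
    ∃ C, 0 ≤ C ∧ ∀ F : ℝ × ℝ → ℝ, SmoothOnStrip F → Per1 F →
      √(Hsq s F) ≤ 1 → |I₃ s a F| ≤ C * √(Hsq s F) ^ 3 := by
  obtain ⟨n, rfl⟩ : ∃ n, s = n + 1 := ⟨s - 1, by omega⟩
  have hb₁ := contDiffOn_dz₁_A₁ ha
  have hb₂ := contDiffOn_dz₂_A₂ ha
  obtain ⟨K₁, hK₁, hbound₁⟩ := exists_abs_integral_pd₂ThroughGrad_mul_le hb₁
    haper.periodicX₂_A₁.dz₁
  obtain ⟨K₂, hK₂, hbound₂⟩ := exists_abs_integral_pd₂ThroughGrad_mul_le hb₂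
    haper.periodicX₂_A₂.dz₂
  refine ⟨(n + 1) * (K₁ + K₂), by positivity, fun F hF hper hnorm => ?_⟩
  have hu₁ := hF.pd₁.iterate_pd₂ n
  have hu₂ := hF.pd₂.iterate_pd₂ n
  have hint : ∀ {b} {u : ℝ × ℝ → ℝ}, ContDiffOn ℝ 2 b slab4 → SmoothOnStrip u →
      IntegrableOn (fun x => pd₂ThroughGrad b F x * (pd₂ u x * u x + u x * pd₂ u x)) unitSq :=
    fun hb hu => ((bddCont_pd₂ThroughGrad hb hF).mul
      ((hu.pd₂.bddCont.mul hu.bddCont).add (hu.bddCont.mul hu.pd₂.bddCont))).integrableOn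
  have hL₁ := L2sq_iterate_pd₂_pd₁_le_sqrt_Hsq_sq hF n
  have hL₂ := L2sq_iterate_pd₂_pd₂_le_sqrt_Hsq_sq n F
  rw [I₃_eq, integral_add (hint hb₁ hu₁) (hint hb₂ hu₂), abs_mul, abs_of_nonneg (by positivity)]
  have e₁ := (hbound₁ hs hF hper hnorm hu₁ hu₁ (hper.pd₁.iterate_pd₂ n)
    (hper.pd₁.iterate_pd₂ n)).trans (mul_le_mul_of_nonneg_left
      (add_le_add hL₁ hL₁) (by positivity))
  have e₂ := (hbound₂ hs hF hper hnorm hu₂ hu₂ (hper.pd₂.iterate_pd₂ n)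
    (hper.pd₂.iterate_pd₂ n)).trans (mul_le_mul_of_nonneg_left
      (add_le_add hL₂ hL₂) (by positivity))
  calc _ ≤ (n + 1) / 2 * (K₁ * √(Hsq (n + 1) F) * (√(Hsq (n + 1) F) ^ 2 + √(Hsq (n + 1) F) ^ 2) +
        K₂ * √(Hsq (n + 1) F) * (√(Hsq (n + 1) F) ^ 2 + √(Hsq (n + 1) F) ^ 2)) :=
        mul_le_mul_of_nonneg_left ((abs_add_le _ _).trans (add_le_add e₁ e₂)) (by positivity)
    _ = _ := by ring

end Estimates

theorem stmt_15 (s : ℕ) (hs : 5 ≤ s) (a : (ℝ × ℝ) × ℝ × ℝ → ℝ × ℝ)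
    (ha : ContDiffOn ℝ ((s : ℕ∞) + 1) a slab4) (haper : PerA a) (hsym : SymA a) :
    ∃ C : ℝ, 0 < C ∧ ∃ r₀ : ℝ, 0 < r₀ ∧
      ∀ F : ℝ × ℝ → ℝ, ContDiffOn ℝ (⊤ : ℕ∞) F strip → Per1 F → Dir F →
        Real.sqrt (Hsq s F) ≤ r₀ →
        |I₂ s a F + I₃ s a F| ≤ C * Real.sqrt (Hsq s F) ^ 3 := by
  have ha₃ : ContDiffOn ℝ 3 a slab4 := ha.of_le (by norm_cast; exact Nat.ofNat_le_cast.2 (by omega))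
  obtain ⟨C₂, hC₂, h₂⟩ := exists_abs_I₂_le ha₃ haper hsym hs
  obtain ⟨C₃, hC₃, h₃⟩ := exists_abs_I₃_le ha₃ haper hs
  refine ⟨C₂ + C₃ + 1, by positivity, 1, one_pos, fun F hF hper _ hnorm => ?_⟩
  have hF' : SmoothOnStrip F := ⟨F, hF, eqOn_refl _ _⟩
  calc |I₂ s a F + I₃ s a F| ≤ C₂ * √(Hsq s F) ^ 3 + C₃ * √(Hsq s F) ^ 3 :=
        (abs_add_le _ _).trans (add_le_add (h₂ F hF' hper hnorm) (h₃ F hF' hper hnorm))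
    _ ≤ (C₂ + C₃ + 1) * √(Hsq s F) ^ 3 := by nlinarith [pow_nonneg (Real.sqrt_nonneg (Hsq s F)) 3]
end
end
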